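/- Let (V, 𝓗) be an arrangement, H₀ ∈ 𝓗, with deleted arrangement 𝓗' = 𝓗 ∖ {H₀} and induced arrangement 𝓗'' = {H ∩ H₀ : H ∈ 𝓗'} in H₀. If 𝓗' is essential (as an arrangement in V) and 𝓗'' is irreducible, then 𝓗 is irreducible. -/

import Mathlib

/-! Let `𝓗 = 𝓗₁ ⊎ 𝓗₂` be a u-plus decomposition with `H₀ ∈ 𝓗₂`. Restriction of functionals
`r : V⋆ → H₀⋆` maps `W(𝓗ᵢ)` onto the span of the induced part `𝓗ᵢ''`, and its kernel, the
annihilator of `H₀`, lies in `W(𝓗₂)`; so the restricted spans still meet only in `0`, and `𝓗₁''`,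
`(𝓗₂ ∖ {H₀})''` is a u-plus decomposition of `𝓗''`. The second part is non-empty because
`𝓗₂ = {H₀}` would force `W(𝓗₁) = W(𝓗') = V⋆`, by essentiality of `𝓗'`. -/

open scoped Classical

noncomputable section

variable {V : Type*} [AddCommGroup V] [Module ℂ V]

/-- A linear hyperplane in `V`: the kernel of a non-zero linear functional. -/
def IsHyperplane (H : Submodule ℂ V) : Prop :=
  ∃ f : Module.Dual ℂ V, f ≠ 0 ∧ H = LinearMap.ker f

/-- An arrangement: every member of the finite set `𝓗` is a linear hyperplane. -/
def IsArrangement (𝓗 : Finset (Submodule ℂ V)) : Prop :=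
  ∀ H ∈ 𝓗, IsHyperplane H

/-- The span `W(𝓗) ⊆ V⋆` of the defining functionals of the members of `𝓗`,
i.e. the supremum of the dual annihilators of the hyperplanes. -/
def arrSpan (𝓗 : Finset (Submodule ℂ V)) : Submodule ℂ (Module.Dual ℂ V) :=
  ⨆ H ∈ 𝓗, Submodule.dualAnnihilator H

/-- The centre `T(𝓗)`: the common intersection of the members of `𝓗`. -/
def arrCentre (𝓗 : Finset (Submodule ℂ V)) : Submodule ℂ V :=
  ⨅ H ∈ 𝓗, H

/-- `𝓗` is essential if its centre is zero. -/
def ArrEssential (𝓗 : Finset (Submodule ℂ V)) : Prop :=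
  arrCentre 𝓗 = ⊥

/-- `𝓗` is reducible if it admits a u-plus decomposition into two non-empty parts:
a partition `𝓗 = 𝓗₁ ⊎ 𝓗₂` with `W(𝓗) = W(𝓗₁) ⊕ W(𝓗₂)`. -/
def ArrReducible (𝓗 : Finset (Submodule ℂ V)) : Prop :=
  ∃ 𝓗₁ 𝓗₂ : Finset (Submodule ℂ V), 𝓗₁.Nonempty ∧ 𝓗₂.Nonempty ∧
    Disjoint 𝓗₁ 𝓗₂ ∧ 𝓗₁ ∪ 𝓗₂ = 𝓗 ∧ Disjoint (arrSpan 𝓗₁) (arrSpan 𝓗₂)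

/-- `𝓗` is irreducible if it is not reducible. -/
def ArrIrreducible (𝓗 : Finset (Submodule ℂ V)) : Prop :=
  ¬ ArrReducible 𝓗

/-- The induced (restricted) arrangement `𝓗'' = {H ∩ H₀ : H ∈ 𝓗 \ {H₀}}`, viewed as
an arrangement of hyperplanes in the vector space `H₀`. -/
def inducedArr (𝓗 : Finset (Submodule ℂ V)) (H₀ : Submodule ℂ V) :
    Finset (Submodule ℂ ↥H₀) :=
  (𝓗.erase H₀).image fun H => Submodule.comap H₀.subtype H

theorem Submodule.dualAnnihilator_comap_eq_map_dualMap {K V₁ V₂ : Type*} [Field K]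
    [AddCommGroup V₁] [Module K V₁] [AddCommGroup V₂] [Module K V₂]
    (W : Submodule K V₂) (f : V₁ →ₗ[K] V₂) :
    (W.comap f).dualAnnihilator = W.dualAnnihilator.map f.dualMap := by
  rw [← W.ker_mkQ, ← LinearMap.ker_comp, ← LinearMap.range_dualMap_eq_dualAnnihilator_ker,
    ← LinearMap.range_dualMap_eq_dualAnnihilator_ker, ← LinearMap.dualMap_comp_dualMap,
    LinearMap.range_comp]

theorem IsHyperplane.ne_top {H : Submodule ℂ V} (hH : IsHyperplane H) : H ≠ ⊤ := by
  obtain ⟨f, hf, rfl⟩ := hH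
  rwa [Ne, LinearMap.ker_eq_top]

theorem dualAnnihilator_le_arrSpan {𝓗 : Finset (Submodule ℂ V)} {H : Submodule ℂ V}
    (hH : H ∈ 𝓗) : H.dualAnnihilator ≤ arrSpan 𝓗 :=
  le_iSup₂ (f := fun H _ => H.dualAnnihilator) H hH

theorem arrSpan_mono {𝓗₁ 𝓗₂ : Finset (Submodule ℂ V)} (h : 𝓗₁ ⊆ 𝓗₂) :
    arrSpan 𝓗₁ ≤ arrSpan 𝓗₂ :=
  iSup₂_le fun _ hH => dualAnnihilator_le_arrSpan (h hH)

theorem arrSpan_eq_dualAnnihilator_arrCentre (𝓗 : Finset (Submodule ℂ V)) :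
    arrSpan 𝓗 = (arrCentre 𝓗).dualAnnihilator := by
  rw [arrCentre, arrSpan, iInf_subtype', iSup_subtype', Subspace.dualAnnihilator_iInf_eq]

theorem ArrEssential.arrSpan_eq_top {𝓗 : Finset (Submodule ℂ V)} (h : ArrEssential 𝓗) :
    arrSpan 𝓗 = ⊤ := by
  rw [arrSpan_eq_dualAnnihilator_arrCentre, h, Submodule.dualAnnihilator_bot]

theorem arrSpan_image_comap (𝓗 : Finset (Submodule ℂ V)) (p : Submodule ℂ V) :
    arrSpan (𝓗.image (Submodule.comap p.subtype)) = (arrSpan 𝓗).map p.subtype.dualMap := by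
  simp only [arrSpan, Finset.iSup_finset_image, Submodule.map_iSup,
    Submodule.dualAnnihilator_comap_eq_map_dualMap]

section Decomposition

variable {𝓗₁ 𝓗₂ : Finset (Submodule ℂ V)}

theorem eq_top_of_mem_of_dualAnnihilator_le_arrSpan (hspan : Disjoint (arrSpan 𝓗₁) (arrSpan 𝓗₂))
    {H : Submodule ℂ V} (hH : H ∈ 𝓗₁)
    (hle : H.dualAnnihilator ≤ arrSpan 𝓗₂) : H = ⊤ := by
  rw [← Submodule.dualAnnihilator_eq_bot_iff, ← le_bot_iff]
  exact (le_inf (dualAnnihilator_le_arrSpan hH) hle).trans hspan.le_bot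

theorem disjoint_of_disjoint_arrSpan (hspan : Disjoint (arrSpan 𝓗₁) (arrSpan 𝓗₂))
    (hne : ∀ H ∈ 𝓗₁, H ≠ ⊤) : Disjoint 𝓗₁ 𝓗₂ :=
  Finset.disjoint_left.mpr fun H hH₁ hH₂ =>
    hne H hH₁ (eq_top_of_mem_of_dualAnnihilator_le_arrSpan hspan hH₁
      (dualAnnihilator_le_arrSpan hH₂))

theorem disjoint_arrSpan_image_comap (hspan : Disjoint (arrSpan 𝓗₁) (arrSpan 𝓗₂))
    {p : Submodule ℂ V} (hp : p.dualAnnihilator ≤ arrSpan 𝓗₂) :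
    Disjoint (arrSpan (𝓗₁.image (Submodule.comap p.subtype)))
      (arrSpan (𝓗₂.image (Submodule.comap p.subtype))) := by
  rw [arrSpan_image_comap, arrSpan_image_comap, Submodule.disjoint_def]
  rintro _ ⟨f₁, hf₁, rfl⟩ ⟨f₂, hf₂, heq⟩
  have hker : f₁ - f₂ ∈ p.dualAnnihilator := by
    rw [← p.range_subtype, ← LinearMap.ker_dualMap_eq_dualAnnihilator_range,
      LinearMap.mem_ker, map_sub, heq, sub_self]
  have hf₁₂ : f₁ ∈ arrSpan 𝓗₂ := sub_add_cancel f₁ f₂ ▸ add_mem (hp hker) hf₂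
  rw [Submodule.disjoint_def.mp hspan f₁ hf₁ hf₁₂, map_zero]

end Decomposition

theorem arrReducible_inducedArr_of_mem_right {𝓗 𝓗₁ 𝓗₂ : Finset (Submodule ℂ V)}
    {H₀ : Submodule ℂ V} (harr : IsArrangement 𝓗) (hess : ArrEssential (𝓗.erase H₀))
    (h₁ : 𝓗₁.Nonempty) (hunion : 𝓗₁ ∪ 𝓗₂ = 𝓗)
    (hspan : Disjoint (arrSpan 𝓗₁) (arrSpan 𝓗₂)) (h₀ : H₀ ∈ 𝓗₂) :
    ArrReducible (inducedArr 𝓗 H₀) := by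
  set c := Submodule.comap H₀.subtype
  have hne₁ : ∀ H ∈ 𝓗₁, H ≠ ⊤ := fun H hH =>
    (harr H (hunion ▸ Finset.mem_union_left _ hH)).ne_top
  have hH₀ : H₀ ∉ 𝓗₁ := Finset.disjoint_right.mp (disjoint_of_disjoint_arrSpan hspan hne₁) h₀
  have herase : 𝓗.erase H₀ = 𝓗₁ ∪ 𝓗₂.erase H₀ := by
    rw [← hunion, Finset.erase_union_distrib, Finset.erase_eq_of_notMem hH₀]
  have hann₀ : H₀.dualAnnihilator ≤ arrSpan 𝓗₂ := dualAnnihilator_le_arrSpan h₀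
  have h₂ : (𝓗₂.erase H₀).Nonempty := by
    rw [Finset.nonempty_iff_ne_empty]
    intro hempty
    rw [hempty, Finset.union_empty] at herase
    have htop : arrSpan 𝓗₁ = ⊤ := herase ▸ hess.arrSpan_eq_top
    exact (harr H₀ (hunion ▸ Finset.mem_union_right _ h₀)).ne_top
      (eq_top_of_mem_of_dualAnnihilator_le_arrSpan hspan.symm h₀ (htop ▸ le_top))
  have hspan' : Disjoint (arrSpan (𝓗₁.image c)) (arrSpan ((𝓗₂.erase H₀).image c)) :=
    (disjoint_arrSpan_image_comap hspan hann₀).mono_right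
      (arrSpan_mono (Finset.image_subset_image (Finset.erase_subset _ _)))
  have hne₁' : ∀ K ∈ 𝓗₁.image c, K ≠ ⊤ := by
    simp only [Finset.forall_mem_image, c, Ne, Submodule.comap_subtype_eq_top]
    intro H hH hle
    exact hne₁ H hH (eq_top_of_mem_of_dualAnnihilator_le_arrSpan hspan hH
      ((Submodule.dualAnnihilator_anti hle).trans hann₀))
  refine ⟨_, _, h₁.image c, h₂.image c, disjoint_of_disjoint_arrSpan hspan' hne₁', ?_, hspan'⟩
  rw [inducedArr, herase, Finset.image_union]

theorem irreducible_of_deleted_essential_induced_irreducible_general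
    (𝓗 : Finset (Submodule ℂ V)) (harr : IsArrangement 𝓗)
    (H₀ : Submodule ℂ V) (h₀ : H₀ ∈ 𝓗)
    (hess : ArrEssential (𝓗.erase H₀))
    (hind : ArrIrreducible (inducedArr 𝓗 H₀)) :
    ArrIrreducible 𝓗 := by
  rintro ⟨𝓗₁, 𝓗₂, h₁, h₂, -, hunion, hspan⟩
  rcases Finset.mem_union.mp (hunion ▸ h₀ : H₀ ∈ 𝓗₁ ∪ 𝓗₂) with h | h
  · exact hind (arrReducible_inducedArr_of_mem_right harr hess h₂
      (by rwa [Finset.union_comm]) hspan.symm h)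
  · exact hind (arrReducible_inducedArr_of_mem_right harr hess h₁ hunion hspan h)

/-- If the deleted arrangement `𝓗' = 𝓗 \ {H₀}` is essential and the
induced arrangement `𝓗''` on `H₀` is irreducible, then `𝓗` is irreducible. -/
theorem irreducible_of_deleted_essential_induced_irreducible
    [FiniteDimensional ℂ V]
    (𝓗 : Finset (Submodule ℂ V)) (harr : IsArrangement 𝓗)
    (H₀ : Submodule ℂ V) (h₀ : H₀ ∈ 𝓗)
    (hess : ArrEssential (𝓗.erase H₀))
    (hind : ArrIrreducible (inducedArr 𝓗 H₀)) :
    ArrIrreducible 𝓗 :=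
  irreducible_of_deleted_essential_induced_irreducible_general 𝓗 harr H₀ h₀ hess hind
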